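/- arXiv:1703.00560 — 5 statements merged into one kernel-verified Lean document; each statement's English description precedes it below -/
import Mathlib

section
/- For θ in (0, π/2], the 2×2 symmetric matrix M(θ) = (1/2)·[[sin 2θ + 2π − 2θ, −(2π − θ)cos θ − sin θ], [−(2π − θ)cos θ − sin θ, 2π]] is positive definite. -/
open Real

lemma pos_aux (θ s p : ℝ) (h0 : 0 < θ) (hp : 3 < p) (hθp : θ ≤ p / 2)
    (hs : 4 * θ ^ 2 ≤ p ^ 2 * s ^ 2) :
    θ ^ 2 < ((2 * p - θ) ^ 2 - 1) * s ^ 2 := by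
  have hθ2 : 0 < θ ^ 2 := by positivity
  have hb : 3 * p / 2 ≤ 2 * p - θ := by linarith
  have h9 : (3 * p / 2) ^ 2 ≤ (2 * p - θ) ^ 2 := by nlinarith
  have hc1 : 0 ≤ (2 * p - θ) ^ 2 - 1 := by nlinarith
  have t1 : ((2 * p - θ) ^ 2 - 1) * (4 * θ ^ 2)
      ≤ ((2 * p - θ) ^ 2 - 1) * (p ^ 2 * s ^ 2) := mul_le_mul_of_nonneg_left hs hc1
  have hcoef' : 9 * p ^ 2 / 4 - 1 ≤ (2 * p - θ) ^ 2 - 1 := by nlinarith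
  have t2 : (9 * p ^ 2 / 4 - 1) * (4 * θ ^ 2)
      ≤ ((2 * p - θ) ^ 2 - 1) * (4 * θ ^ 2) :=
    mul_le_mul_of_nonneg_right hcoef' (by positivity)
  have t3 : p ^ 2 * θ ^ 2 < (9 * p ^ 2 / 4 - 1) * (4 * θ ^ 2) := by
    nlinarith [mul_pos hθ2 (show (0:ℝ) < 8 * p ^ 2 - 4 by nlinarith)]
  have t4 : p ^ 2 * θ ^ 2 < p ^ 2 * (((2 * p - θ) ^ 2 - 1) * s ^ 2) := by nlinarith [t1, t2, t3]
  exact lt_of_mul_lt_mul_left t4 (by positivity)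

/-- Determinant positivity : `((2π−θ)cos θ + sin θ)² < 2π(sin 2θ + 2π − 2θ)`. -/
lemma det_aux (θ : ℝ) (h0 : 0 < θ) (h1 : θ ≤ Real.pi / 2) :
    ((2 * Real.pi - θ) * Real.cos θ + Real.sin θ) ^ 2
      < 2 * Real.pi * (Real.sin (2 * θ) + 2 * Real.pi - 2 * θ) := by
  have hpi := Real.pi_pos
  have hs2 : Real.sin θ ^ 2 + Real.cos θ ^ 2 = 1 := Real.sin_sq_add_cos_sq θ
  have hsin2 : Real.sin (2 * θ) = 2 * Real.sin θ * Real.cos θ := Real.sin_two_mul θ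
  have hJ : 2 / Real.pi * θ ≤ Real.sin θ := Real.mul_le_sin h0.le h1
  have hsnn : 0 ≤ Real.sin θ := le_trans (by positivity) hJ
  have hs2θ : 0 ≤ Real.sin (2 * θ) := by
    apply Real.sin_nonneg_of_nonneg_of_le_pi (by linarith)
    linarith
  -- key algebraic identity: difference = θ sin 2θ + ((2π−θ)² − 1) sin²θ − θ²
  have hkey : 2 * Real.pi * (Real.sin (2 * θ) + 2 * Real.pi - 2 * θ)
      - ((2 * Real.pi - θ) * Real.cos θ + Real.sin θ) ^ 2
      = θ * Real.sin (2 * θ) + ((2 * Real.pi - θ) ^ 2 - 1) * Real.sin θ ^ 2 - θ ^ 2 := by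
    nlinarith [hs2, hsin2]
  have hθs : 0 ≤ θ * Real.sin (2 * θ) := by positivity
  have hb : (3 * Real.pi / 2) ≤ 2 * Real.pi - θ := by linarith
  have h9 : (3 * Real.pi / 2) ^ 2 ≤ (2 * Real.pi - θ) ^ 2 := by nlinarith
  have hpi3 : 3 < Real.pi := by nlinarith [Real.pi_gt_d6]
  have hsq : (2 / Real.pi * θ) ^ 2 ≤ Real.sin θ ^ 2 :=
    pow_le_pow_left₀ (by positivity) hJ 2
  have hsq' : 4 * θ ^ 2 ≤ Real.pi ^ 2 * Real.sin θ ^ 2 := by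
    have h2 : (2 / Real.pi * θ) ^ 2 = 4 * θ ^ 2 / Real.pi ^ 2 := by
      field_simp; ring
    rw [h2] at hsq
    rw [div_le_iff₀ (by positivity)] at hsq
    nlinarith
  have hsnn2 : 0 ≤ Real.sin θ ^ 2 := sq_nonneg _
  have hcoef : 9 * Real.pi ^ 2 / 4 - 1 ≤ (2 * Real.pi - θ) ^ 2 - 1 := by nlinarith
  have hpos : θ ^ 2 < ((2 * Real.pi - θ) ^ 2 - 1) * Real.sin θ ^ 2 :=
    pos_aux θ (Real.sin θ) Real.pi h0 hpi3 h1 hsq'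
  linarith

theorem M_posDef (θ : ℝ) (h0 : 0 < θ) (h1 : θ ≤ Real.pi / 2) :
    (((1 : ℝ) / 2) •
      !![Real.sin (2 * θ) + 2 * Real.pi - 2 * θ,
         -((2 * Real.pi - θ) * Real.cos θ) - Real.sin θ;
         -((2 * Real.pi - θ) * Real.cos θ) - Real.sin θ,
         2 * Real.pi] : Matrix (Fin 2) (Fin 2) ℝ).PosDef := by
  have hpi := Real.pi_pos
  set a : ℝ := Real.sin (2 * θ) + 2 * Real.pi - 2 * θ with ha
  set b : ℝ := -((2 * Real.pi - θ) * Real.cos θ) - Real.sin θ with hb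
  have hs2θ : 0 ≤ Real.sin (2 * θ) := by
    apply Real.sin_nonneg_of_nonneg_of_le_pi (by linarith)
    linarith
  have hapos : 0 < a := by rw [ha]; linarith
  have hdet : b ^ 2 < a * (2 * Real.pi) := by
    have h := det_aux θ h0 h1
    rw [hb, ha]; nlinarith [h]
  refine ⟨?_, ?_⟩
  · show _ = _
    ext i j
    fin_cases i <;> fin_cases j <;>
      simp [Matrix.conjTranspose_apply]
  · intro x hx
    have hform : (x.sum fun i xi ↦ x.sum fun j xj ↦ star xi * (((1 : ℝ) / 2) •
        !![a, b; b, 2 * Real.pi] : Matrix (Fin 2) (Fin 2) ℝ) i j * xj)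
        = (1 / 2) * (a * (x 0) ^ 2 + 2 * b * (x 0) * (x 1) + 2 * Real.pi * (x 1) ^ 2) := by
      simp [Finsupp.sum_fintype, Fin.sum_univ_two]
      ring
    rw [hform]
    clear hform
    have hx01 : x 0 ≠ 0 ∨ x 1 ≠ 0 := by
      by_contra h
      push_neg at h
      apply hx
      ext i; fin_cases i <;> simp [h.1, h.2]
    have hQ : 0 < a * (x 0) ^ 2 + 2 * b * (x 0) * (x 1) + 2 * Real.pi * (x 1) ^ 2 := by
      rcases eq_or_ne (x 1) 0 with h1' | h1'
      · have h0' : x 0 ≠ 0 := by tauto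
        rw [h1']
        have : 0 < (x 0) ^ 2 := by positivity
        nlinarith
      · have key : a * (a * (x 0) ^ 2 + 2 * b * (x 0) * (x 1) + 2 * Real.pi * (x 1) ^ 2)
            = (a * x 0 + b * x 1) ^ 2 + (a * (2 * Real.pi) - b ^ 2) * (x 1) ^ 2 := by ring
        have h1sq : 0 < (x 1) ^ 2 := by positivity
        nlinarith [sq_nonneg (a * x 0 + b * x 1)]
    exact mul_pos (by norm_num : (0:ℝ) < 1/2) hQ
end

section
/- For θ in (0, π/2], 2π(sin 2θ + 2π − 2θ) − ((2π − θ)cos θ + sin θ)² > 0. -/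
/-!
Writing `s = sin θ`, `c = cos θ`, the expression equals `((2π - θ) s)² - s² - θ² + 2θsc`.
Jordan's inequality `s ≥ 2θ/π` together with `2π - θ ≥ 3π/2` gives `(2π - θ) s ≥ 3θ`, and `s ≤ θ`,
so the expression is at least `9θ² - θ² - θ² = 7θ² > 0`.
-/

open Real

lemma mul_sub_sq_mul_cos_add_sin (a θ s c : ℝ) (h : s ^ 2 + c ^ 2 = 1) :
    a * (2 * s * c + a - 2 * θ) - ((a - θ) * c + s) ^ 2
      = ((a - θ) * s) ^ 2 - s ^ 2 - θ ^ 2 + 2 * θ * (s * c) := by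
  linear_combination (-(a - θ) ^ 2) * h

lemma three_mul_le_two_pi_sub_mul_sin {θ : ℝ} (h0 : 0 ≤ θ) (h1 : θ ≤ π / 2) :
    3 * θ ≤ (2 * π - θ) * sin θ :=
  calc 3 * θ = 3 * π / 2 * (2 / π * θ) := by field_simp
    _ ≤ (2 * π - θ) * sin θ :=
      mul_le_mul (by linarith) (mul_le_sin h0 h1) (by positivity) (by linarith [pi_pos])

theorem det_ineq (θ : ℝ) (h0 : 0 < θ) (h1 : θ ≤ Real.pi / 2) :
    0 < 2 * Real.pi * (Real.sin (2 * θ) + 2 * Real.pi - 2 * θ) -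
        ((2 * Real.pi - θ) * Real.cos θ + Real.sin θ) ^ 2 := by
  have hsin : 0 ≤ sin θ := sin_nonneg_of_nonneg_of_le_pi h0.le (by linarith [pi_pos])
  have hcos : 0 ≤ cos θ := cos_nonneg_of_mem_Icc ⟨by linarith [pi_pos], h1⟩
  have hlower : (3 * θ) ^ 2 ≤ ((2 * π - θ) * sin θ) ^ 2 :=
    pow_le_pow_left₀ (by positivity) (three_mul_le_two_pi_sub_mul_sin h0.le h1) 2
  have hupper : sin θ ^ 2 ≤ θ ^ 2 := pow_le_pow_left₀ hsin (sin_le h0.le) 2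
  rw [sin_two_mul, mul_sub_sq_mul_cos_add_sin _ _ _ _ (sin_sq_add_cos_sq θ)]
  nlinarith [mul_nonneg hsin hcos]
end

section
/- For x > 0 and 0 < s < 1, x^{1−s} < Γ(x+1)/Γ(x+s) < (x+s)^{1−s}. -/
/-!
Both bounds come from the strict form of Wendel's inequality `Γ(y + t) < y ^ t Γ(y)`
(`y > 0`, `0 < t < 1`): with `y = x`, `t = s` it gives `Γ(x + s) < x ^ s Γ(x) = x ^ (s - 1) Γ(x + 1)`,
and with `y = x + s`, `t = 1 - s` it gives `Γ(x + 1) < (x + s) ^ (1 - s) Γ(x + s)`.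
Wendel's inequality itself is log-convexity of `Γ` between `y` and `y + 1`; strictness is obtained
by applying it at `y + 1` instead and paying for the shift with the strict weighted AM-GM inequality
`y ^ (1 - t) (y + 1) ^ t < y + t`.
-/

open Real

namespace Real

theorem Gamma_add_le_rpow_mul_Gamma {y t : ℝ} (hy : 0 < y) (ht0 : 0 < t) (ht1 : t < 1) :
    Gamma (y + t) ≤ y ^ t * Gamma y := by
  have hΓ := Gamma_pos_of_pos hy
  calc Gamma (y + t) = Gamma ((1 - t) * y + t * (y + 1)) := by ring_nf
    _ ≤ Gamma y ^ (1 - t) * Gamma (y + 1) ^ t :=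
      Gamma_mul_add_mul_le_rpow_Gamma_mul_rpow_Gamma hy (by linarith) (by linarith) ht0
        (by ring)
    _ = y ^ t * (Gamma y ^ (1 - t) * Gamma y ^ t) := by
      rw [Gamma_add_one hy.ne', mul_rpow hy.le hΓ.le]; ring
    _ = y ^ t * Gamma y := by rw [← rpow_add hΓ, sub_add_cancel, rpow_one]

theorem Gamma_add_lt_rpow_mul_Gamma {y t : ℝ} (hy : 0 < y) (ht0 : 0 < t) (ht1 : t < 1) :
    Gamma (y + t) < y ^ t * Gamma y := by
  have hyt : 0 < y + t := by linarith
  have hΓ := Gamma_pos_of_pos hy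
  have amgm : y ^ (1 - t) * (y + 1) ^ t < y + t := by
    have := (geom_mean_lt_arith_mean2_weighted_iff_of_pos (sub_pos.2 ht1) ht0 hy.le
      (by linarith : (0 : ℝ) ≤ y + 1) (by ring)).2 (by linarith)
    linarith
  have shifted : (y + t) * Gamma (y + t) ≤ (y + 1) ^ t * (y * Gamma y) := by
    rw [← Gamma_add_one hyt.ne', ← Gamma_add_one hy.ne', add_right_comm]
    exact Gamma_add_le_rpow_mul_Gamma (by linarith) ht0 ht1
  refine lt_of_mul_lt_mul_left ?_ hyt.le
  calc (y + t) * Gamma (y + t) ≤ (y + 1) ^ t * (y * Gamma y) := shifted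
    _ = y ^ t * (y ^ (1 - t) * (y + 1) ^ t) * Gamma y := by
      rw [← mul_assoc (y ^ t), ← rpow_add hy, add_sub_cancel, rpow_one]; ring
    _ < y ^ t * (y + t) * Gamma y := by gcongr
    _ = (y + t) * (y ^ t * Gamma y) := by ring

end Real

theorem gautschi (x s : ℝ) (hx : 0 < x) (hs0 : 0 < s) (hs1 : s < 1) :
    x ^ (1 - s) < Real.Gamma (x + 1) / Real.Gamma (x + s) ∧
      Real.Gamma (x + 1) / Real.Gamma (x + s) < (x + s) ^ (1 - s) := by
  have hxs : 0 < x + s := by linarith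
  have hΓ := Gamma_pos_of_pos hxs
  constructor
  · rw [lt_div_iff₀ hΓ, Gamma_add_one hx.ne']
    calc x ^ (1 - s) * Gamma (x + s) < x ^ (1 - s) * (x ^ s * Gamma x) := by
          gcongr; exact Gamma_add_lt_rpow_mul_Gamma hx hs0 hs1
      _ = x * Gamma x := by rw [← mul_assoc, ← rpow_add hx, sub_add_cancel, rpow_one]
  · rw [div_lt_iff₀ hΓ]
    have := Gamma_add_lt_rpow_mul_Gamma hxs (sub_pos.2 hs1) (by linarith)
    rwa [add_add_sub_cancel] at this
end

section
/- For K ≥ 2 and θ ∈ [0, arccos(1/√K)), the function f(θ) = (1/2)sin 2θ + √(K−1)·sin²θ − θ is nonnegative, with equality only at θ = 0. -/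
theorem f33_nonneg (K : ℕ) (hK : 2 ≤ K) (θ : ℝ)
    (h0 : 0 ≤ θ) (h1 : θ < Real.arccos (1 / Real.sqrt K)) :
    0 ≤ 1 / 2 * Real.sin (2 * θ) + Real.sqrt (K - 1) * Real.sin θ ^ 2 - θ ∧
      (1 / 2 * Real.sin (2 * θ) + Real.sqrt (K - 1) * Real.sin θ ^ 2 - θ = 0 →
        θ = 0) := by
  have hK2 : (2 : ℝ) ≤ K := by exact_mod_cast hK
  have hsqK : 1 < Real.sqrt K := by
    rw [show (1:ℝ) = Real.sqrt 1 by simp]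
    exact Real.sqrt_lt_sqrt (by norm_num) (by linarith)
  have hx0 : 0 < 1 / Real.sqrt K := by positivity
  have hx1 : 1 / Real.sqrt K < 1 := by
    rw [div_lt_one (by linarith)]; exact hsqK
  set θ₀ := Real.arccos (1 / Real.sqrt K) with hθ₀
  have hθ₀lt : θ₀ < Real.pi / 2 := by
    rw [hθ₀, Real.arccos_lt_pi_div_two]; exact hx0
  have hθ₀le : θ₀ ≤ Real.pi := Real.arccos_le_pi _
  have hcosθ₀ : Real.cos θ₀ = 1 / Real.sqrt K :=
    Real.cos_arccos (by linarith) (le_of_lt hx1)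
  have hsinθ₀ : Real.sin θ₀ = Real.sqrt (K - 1) / Real.sqrt K := by
    rw [hθ₀, Real.sin_arccos]
    rw [div_pow, one_pow, Real.sq_sqrt (by linarith : (0:ℝ) ≤ K)]
    rw [show 1 - 1 / (K:ℝ) = (K - 1) / K by field_simp]
    rw [Real.sqrt_div (by linarith)]
  have hθlt : θ < Real.pi / 2 := lt_trans h1 hθ₀lt
  have hcosθ : 1 / Real.sqrt K < Real.cos θ := by
    rw [← hcosθ₀]
    exact Real.cos_lt_cos_of_nonneg_of_le_pi h0 hθ₀le h1
  have hcospos : 0 < Real.cos θ := lt_trans hx0 hcosθ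
  have hsinθ : Real.sin θ ≤ Real.sin θ₀ := by
    apply Real.sin_le_sin_of_le_of_le_pi_div_two (by linarith [Real.pi_pos]) (le_of_lt hθ₀lt) (le_of_lt h1)
  have hs1 : 1 ≤ Real.sqrt ((K:ℝ) - 1) := by
    have := Real.sqrt_le_sqrt (show (1:ℝ) ≤ (K:ℝ) - 1 by linarith)
    simpa using this
  have hkey : Real.sin θ < Real.sqrt ((K:ℝ) - 1) * Real.cos θ := by
    calc Real.sin θ ≤ Real.sin θ₀ := hsinθ
    _ = Real.sqrt ((K:ℝ) - 1) * (1 / Real.sqrt K) := by rw [hsinθ₀]; ring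
    _ < Real.sqrt ((K:ℝ) - 1) * Real.cos θ := by
        apply mul_lt_mul_of_pos_left hcosθ (by linarith)
  have hident : 1 / 2 * Real.sin (2 * θ) + Real.sqrt ((K:ℝ) - 1) * Real.sin θ ^ 2 - θ
      = (Real.tan θ - θ) + Real.sin θ ^ 2 * (Real.sqrt ((K:ℝ) - 1) * Real.cos θ - Real.sin θ) / Real.cos θ := by
    rw [Real.sin_two_mul, Real.tan_eq_sin_div_cos]
    field_simp
    linear_combination Real.sin θ * Real.sin_sq_add_cos_sq θ
  have htan : θ ≤ Real.tan θ := by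
    rcases eq_or_lt_of_le h0 with h | h
    · simp [← h]
    · exact le_of_lt (Real.lt_tan h hθlt)
  have hsq : 0 ≤ Real.sin θ ^ 2 := sq_nonneg _
  constructor
  · rw [hident]
    have : 0 ≤ Real.sin θ ^ 2 * (Real.sqrt ((K:ℝ) - 1) * Real.cos θ - Real.sin θ) / Real.cos θ := by
      apply div_nonneg _ (le_of_lt hcospos)
      exact mul_nonneg hsq (by linarith)
    linarith
  · intro heq
    by_contra hne
    have hθpos : 0 < θ := lt_of_le_of_ne h0 (Ne.symm hne)
    have hsinpos : 0 < Real.sin θ := Real.sin_pos_of_pos_of_lt_pi hθpos (by linarith [Real.pi_pos, hθlt])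
    have h2 : 0 < Real.sin θ ^ 2 * (Real.sqrt ((K:ℝ) - 1) * Real.cos θ - Real.sin θ) / Real.cos θ := by
      apply div_pos _ hcospos
      exact mul_pos (by positivity) (by linarith)
    have h3 : θ < Real.tan θ := Real.lt_tan hθpos hθlt
    rw [hident] at heq
    linarith
end

section
/- Let w, w* ∈ ℝ^d be nonzero, θ = angle between them, and define G(w) = (1/2)(w − w*) + (1/(2π))(θ·w* − (‖w*‖/‖w‖)·sin θ·w). If 0 < ‖w − w*‖ < ‖w*‖ and w ≠ w*, then (w − w*)ᵀ G(w) > 0. -/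
/-!
Write `a = ‖w‖`, `b = ‖w*‖`, `θ = ∠(w, w*)`. Since `⟪w, w*⟫ = a b cos θ`,
`2π ⟪w - w*, G w⟫ = π ‖w - w*‖² - b (a (sin θ - θ cos θ) + b (θ - sin θ cos θ))`.
The hypothesis `‖w - w*‖ < ‖w*‖` means `a < 2 b cos θ`, so `θ ≤ π/2`. There
`sin θ ≤ θ` and `θ cos θ ≤ sin θ` bound the angular term by `(π/2)(1 - cos θ) b (a + 2b)`, and
`2 ‖w - w*‖² - (1 - cos θ) b (a + 2b) = 2 (a - b cos θ)² + (1 - cos θ) b (2 b cos θ - a) > 0`.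
-/

open Real InnerProductGeometry
open scoped RealInnerProductSpace

theorem Real.mul_cos_le_sin {x : ℝ} (hx₀ : 0 ≤ x) (hx : x ≤ π) : x * cos x ≤ sin x := by
  rcases lt_or_ge x (π / 2) with hlt | hge
  · have hcos : 0 < cos x := cos_pos_of_mem_Ioo ⟨by linarith [pi_pos], hlt⟩
    have htan := le_tan hx₀ hlt
    rwa [tan_eq_sin_div_cos, le_div_iff₀ hcos] at htan
  · have hcos : cos x ≤ 0 := cos_nonpos_of_pi_div_two_le_of_le hge (by linarith [pi_pos])
    nlinarith [sin_nonneg_of_nonneg_of_le_pi hx₀ hx]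

theorem Real.le_pi_div_two_of_cos_pos {x : ℝ} (hx : x ≤ π) (hcos : 0 < cos x) : x ≤ π / 2 := by
  by_contra! h
  exact (cos_nonpos_of_pi_div_two_le_of_le h.le (by linarith [pi_pos])).not_gt hcos

noncomputable def reluAngularTerm (a b θ : ℝ) : ℝ :=
  b * (a * (sin θ - θ * cos θ) + b * (θ - sin θ * cos θ))

theorem reluAngularTerm_lt {a b θ : ℝ} (ha : 0 < a) (hb : 0 < b) (hθ₀ : 0 ≤ θ) (hθ : θ ≤ π)
    (hpos : 0 < a ^ 2 + b ^ 2 - 2 * a * b * cos θ)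
    (hlt : a ^ 2 + b ^ 2 - 2 * a * b * cos θ < b ^ 2) :
    reluAngularTerm a b θ < π * (a ^ 2 + b ^ 2 - 2 * a * b * cos θ) := by
  set c := cos θ
  set s := sin θ
  set X := a ^ 2 + b ^ 2 - 2 * a * b * c
  have hac : a < 2 * b * c := by nlinarith
  have hθ₂ : θ ≤ π / 2 := le_pi_div_two_of_cos_pos hθ (by nlinarith)
  have hc₁ : c ≤ 1 := cos_le_one θ
  have hsin : s - θ * c ≤ θ * (1 - c) := by nlinarith [sin_le hθ₀]
  have hsincos : θ - s * c ≤ 2 * (θ * (1 - c)) := by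
    nlinarith [mul_cos_le_sin hθ₀ hθ, mul_nonneg (sub_nonneg.2 (sin_le hθ₀)) (sub_nonneg.2 hc₁)]
  -- `2 X - (1 - c) b (a + 2 b) = 2 (a - b c)² + (1 - c) b (2 b c - a)`
  have hquad : (1 - c) * b * (a + 2 * b) < 2 * X := by
    rcases hc₁.lt_or_eq with hc | hc
    · nlinarith [sq_nonneg (a - b * c), mul_pos (mul_pos (sub_pos.2 hc) hb) (sub_pos.2 hac)]
    · rw [hc]; linarith
  calc reluAngularTerm a b θ
      ≤ b * (a * (θ * (1 - c)) + b * (2 * (θ * (1 - c)))) := by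
        unfold reluAngularTerm; gcongr
    _ = θ * ((1 - c) * b * (a + 2 * b)) := by ring
    _ ≤ π / 2 * ((1 - c) * b * (a + 2 * b)) := by gcongr
    _ < π / 2 * (2 * X) := by gcongr
    _ = π * X := by ring

variable {E : Type*} [NormedAddCommGroup E] [InnerProductSpace ℝ E]

noncomputable def expectedGradient (w wstar : E) : E :=
  (1 / 2 : ℝ) • (w - wstar) +
    (1 / (2 * π)) • (angle w wstar • wstar - ((‖wstar‖ / ‖w‖) * sin (angle w wstar)) • w)

theorem inner_sub_expectedGradient {w wstar : E} (hw : w ≠ 0) :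
    ⟪w - wstar, expectedGradient w wstar⟫ =
      (π * ‖w - wstar‖ ^ 2 - reluAngularTerm ‖w‖ ‖wstar‖ (angle w wstar)) / (2 * π) := by
  have hinner : ⟪w, wstar⟫ = ‖w‖ * ‖wstar‖ * cos (angle w wstar) := by
    rw [← cos_angle_mul_norm_mul_norm]; ring
  have hw' : ‖w‖ ≠ 0 := norm_ne_zero_iff.2 hw
  simp only [expectedGradient, reluAngularTerm, inner_add_right, inner_sub_left, inner_sub_right,
    real_inner_smul_right, real_inner_self_eq_norm_sq, real_inner_comm w wstar, norm_sub_sq_real,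
    hinner]
  field_simp
  ring

theorem inner_sub_expectedGradient_pos {w wstar : E} (hw : w ≠ 0) (hne : w ≠ wstar)
    (hlt : ‖w - wstar‖ < ‖wstar‖) : 0 < ⟪w - wstar, expectedGradient w wstar⟫ := by
  have hlaw : ‖w - wstar‖ ^ 2 = ‖w‖ ^ 2 + ‖wstar‖ ^ 2 - 2 * ‖w‖ * ‖wstar‖ * cos (angle w wstar) := by
    simpa only [← sq] using
      norm_sub_sq_eq_norm_sq_add_norm_sq_sub_two_mul_norm_mul_norm_mul_cos_angle w wstar
  have hsq_pos : 0 < ‖w - wstar‖ ^ 2 := pow_pos (norm_sub_pos_iff.2 hne) 2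
  have hsq_lt : ‖w - wstar‖ ^ 2 < ‖wstar‖ ^ 2 := pow_lt_pow_left₀ hlt (norm_nonneg _) two_ne_zero
  have hangular := reluAngularTerm_lt (norm_pos_iff.2 hw) ((norm_nonneg _).trans_lt hlt)
    (angle_nonneg w wstar) (angle_le_pi w wstar) (hlaw ▸ hsq_pos) (hlaw ▸ hsq_lt)
  rw [inner_sub_expectedGradient hw, hlaw]
  exact div_pos (by linarith) (by positivity)

theorem lyapunov_decrease_general (d : ℕ) (w wstar : EuclideanSpace ℝ (Fin d))
    (hw : w ≠ 0) (hne : w ≠ wstar)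
    (h1 : ‖w - wstar‖ < ‖wstar‖)
    (θ : ℝ) (hθ : θ = Real.arccos (⟪w, wstar⟫ / (‖w‖ * ‖wstar‖))) :
    0 < ⟪w - wstar,
        (1 / 2 : ℝ) • (w - wstar) +
          (1 / (2 * Real.pi)) •
            (θ • wstar - ((‖wstar‖ / ‖w‖) * Real.sin θ) • w)⟫ := by
  subst hθ
  exact inner_sub_expectedGradient_pos hw hne h1

theorem lyapunov_decrease (d : ℕ) (w wstar : EuclideanSpace ℝ (Fin d))
    (hw : w ≠ 0) (hwstar : wstar ≠ 0) (hne : w ≠ wstar)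
    (h0 : 0 < ‖w - wstar‖) (h1 : ‖w - wstar‖ < ‖wstar‖)
    (θ : ℝ) (hθ : θ = Real.arccos (⟪w, wstar⟫ / (‖w‖ * ‖wstar‖))) :
    0 < ⟪w - wstar,
        (1 / 2 : ℝ) • (w - wstar) +
          (1 / (2 * Real.pi)) •
            (θ • wstar - ((‖wstar‖ / ‖w‖) * Real.sin θ) • w)⟫ :=
  lyapunov_decrease_general d w wstar hw hne h1 θ hθ
end
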